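/- Let Y and Z be jointly normal random variables with mean 0, standard deviations \sigma_Y, \sigma_Z > 0 and correlation coefficient \rho with |\rho| < 1. Then the ratio X = Y/Z follows the Cauchy distribution with location parameter \alpha = \rho \sigma_Y / \sigma_Z and scale parameter \beta = (\sigma_Y/\sigma_Z)\sqrt{1 - \rho^2}. -/

import Mathlib

/-!
With `t = √(1 - ρ²)`, the rotation of angle `arccos ρ` maps `(W₁, W₂)` to
`(V₁, V₂) = (ρ W₁ + t W₂, -t W₁ + ρ W₂)`, again a pair of independent standard normals since the
standard Gaussian on `ℝ²` is rotation invariant; inverting the rotation, `W₁ = ρ V₁ - t V₂`, so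
`Y / Z = (σY / σZ) (ρ - t V₂ / V₁)` almost surely. The ratio `V₂ / V₁` is standard Cauchy,
its density at `x` being `∫ |z| φ(z) φ(xz) dz = 1 / (π (1 + x²))`, and `a + b X` is
`C(a + b x₀, |b| γ)` when `X` is `C(x₀, γ)`.
-/

open MeasureTheory ProbabilityTheory Real Set
open scoped ENNReal NNReal

lemma withDensity_map_const_add_mul (g : ℝ → ℝ≥0∞) (a : ℝ) {b : ℝ} (hb : b ≠ 0) :
    (volume.withDensity g).map (fun x => a + b * x) =
      volume.withDensity (fun y => ENNReal.ofReal |b|⁻¹ * g ((y - a) / b)) := by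
  have hφ : Measurable fun x : ℝ => a + b * x := by fun_prop
  have hφ' (x : ℝ) : HasDerivAt (fun x => a + b * x) b x := by
    simpa using ((hasDerivAt_id x).const_mul b).const_add a
  have hsurj : Function.Surjective fun x : ℝ => a + b * x := fun y =>
    ⟨(y - a) / b, by field_simp; ring⟩
  ext s hs
  rw [Measure.map_apply hφ hs, withDensity_apply _ (hφ hs), withDensity_apply _ hs]
  conv_rhs => rw [← image_preimage_eq s hsurj]
  rw [lintegral_image_eq_lintegral_abs_deriv_mul (hφ hs) (fun x _ => (hφ' x).hasDerivWithinAt)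
    (fun x _ y _ h => by simpa [hb] using h)]
  refine setLIntegral_congr_fun (hφ hs) fun x _ => ?_
  rw [← mul_assoc, ← ENNReal.ofReal_mul (abs_nonneg b),
    mul_inv_cancel₀ (abs_ne_zero.2 hb), ENNReal.ofReal_one, one_mul]
  congr 1
  field_simp
  ring

lemma prod_withDensity_map_div {ν : Measure ℝ} [SFinite ν] (hν : ν {0} = 0)
    {g : ℝ → ℝ≥0∞} (hg : Measurable g) :
    (ν.prod (volume.withDensity g)).map (fun p => p.2 / p.1) =
      volume.withDensity (fun x => ∫⁻ z, ENNReal.ofReal |z| * g (x * z) ∂ν) := by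
  have hdiv : Measurable fun p : ℝ × ℝ => p.2 / p.1 := by fun_prop
  ext s hs
  rw [Measure.map_apply hdiv hs, Measure.prod_apply (hdiv hs), withDensity_apply _ hs]
  have hslice : ∀ᵐ z ∂ν, volume.withDensity g (Prod.mk z ⁻¹' ((fun p => p.2 / p.1) ⁻¹' s)) =
      ∫⁻ x in s, ENNReal.ofReal |z| * g (x * z) := by
    filter_upwards [measure_eq_zero_iff_ae_notMem.1 hν] with z hz
    have hz : z ≠ 0 := hz
    have hscale : (fun u : ℝ => u / z) = fun u => 0 + z⁻¹ * u := by ext; ring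
    change volume.withDensity g ((fun u : ℝ => u / z) ⁻¹' s) = _
    rw [← Measure.map_apply (by fun_prop) hs, hscale,
      withDensity_map_const_add_mul g 0 (inv_ne_zero hz), withDensity_apply _ hs]
    simp [abs_inv]
  rw [lintegral_congr_ae hslice, lintegral_lintegral_swap (by fun_prop)]

lemma cauchyMeasure_map_const_add_mul (x₀ : ℝ) (γ : ℝ≥0) (a : ℝ) {b : ℝ} (hb : b ≠ 0) :
    (cauchyMeasure x₀ γ).map (fun x => a + b * x) = cauchyMeasure (a + b * x₀) (‖b‖₊ * γ) := by
  rcases eq_or_ne γ 0 with rfl | hγ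
  · simp [Measure.map_dirac' (f := fun x : ℝ => a + b * x) (by fun_prop)]
  rw [cauchyMeasure_of_scale_ne_zero _ hγ,
    cauchyMeasure_of_scale_ne_zero _ (mul_ne_zero (nnnorm_ne_zero_iff.2 hb) hγ),
    withDensity_map_const_add_mul _ _ hb]
  congr with y
  simp only [cauchyPDF, cauchyPDFReal, ← ENNReal.ofReal_mul (inv_nonneg.2 (abs_nonneg b))]
  congr 1
  push_cast
  rw [norm_eq_abs]
  have hb' : 0 < |b| := abs_pos.2 hb
  have hγ' : 0 < (γ : ℝ) := by positivity
  field_simp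
  rw [sq_abs]
  ring

lemma cauchyMeasure_toNNReal_eq_withDensity (α : ℝ) {β : ℝ} (hβ : 0 < β) :
    cauchyMeasure α β.toNNReal =
      volume.withDensity (fun x => ENNReal.ofReal (1 / (β * π * (1 + ((x - α) / β) ^ 2)))) := by
  rw [cauchyMeasure_of_scale_ne_zero _ (by simpa using hβ)]
  congr with x
  rw [cauchyPDF, cauchyPDFReal_def', NNReal.coe_inv, Real.coe_toNNReal _ hβ.le]
  congr 1
  field_simp

lemma ContinuousLinearMap.rotation_arccos_apply {E : Type*} [NormedAddCommGroup E]
    [NormedSpace ℝ E] {ρ t : ℝ} (hρt : ρ ^ 2 + t ^ 2 = 1) (ht : 0 ≤ t) (p : E × E) :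
    ContinuousLinearMap.rotation (arccos ρ) p = (ρ • p.1 + t • p.2, -t • p.1 + ρ • p.2) := by
  have ht' : √(1 - ρ ^ 2) = t := by rw [← hρt, add_sub_cancel_left, sqrt_sq ht]
  rw [ContinuousLinearMap.rotation_apply, cos_arccos (by nlinarith) (by nlinarith), sin_arccos, ht']

lemma integral_abs_mul_exp_neg_mul_sq {b : ℝ} (hb : 0 < b) :
    ∫ x, |x| * exp (-b * x ^ 2) = b⁻¹ := by
  have hIoi : ∫ x in Ioi (0 : ℝ), x * exp (-b * x ^ 2) = b⁻¹ / 2 := by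
    have h := integral_rpow_mul_exp_neg_mul_rpow (q := 1) two_pos (by norm_num) hb
    norm_num [rpow_natCast, rpow_neg_one] at h
    simpa [div_eq_mul_inv] using h
  have h := integral_comp_abs (f := fun x => x * exp (-b * x ^ 2))
  simp only [sq_abs] at h
  rw [h, hIoi]
  ring

lemma gaussianPDFReal_mul_gaussianPDFReal (z w : ℝ) :
    gaussianPDFReal 0 1 z * gaussianPDFReal 0 1 w = (2 * π)⁻¹ * exp (-(z ^ 2 + w ^ 2) / 2) := by
  have h2π : (2 * π)⁻¹ = (√(2 * π))⁻¹ * (√(2 * π))⁻¹ := by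
    rw [← mul_inv, mul_self_sqrt (by positivity)]
  simp only [gaussianPDFReal, NNReal.coe_one, mul_one, sub_zero]
  rw [h2π, show -(z ^ 2 + w ^ 2) / 2 = -z ^ 2 / 2 + -w ^ 2 / 2 by ring, exp_add]
  ring

lemma lintegral_abs_mul_gaussianPDF_mul_eq_cauchyPDF (x : ℝ) :
    ∫⁻ z, ENNReal.ofReal |z| * gaussianPDF 0 1 (x * z) ∂gaussianReal 0 1 = cauchyPDF 0 1 x := by
  have hb : 0 < (1 + x ^ 2) / 2 := by positivity
  have hpoint (z : ℝ) : gaussianPDF 0 1 z * (ENNReal.ofReal |z| * gaussianPDF 0 1 (x * z)) =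
      ENNReal.ofReal ((2 * π)⁻¹ * (|z| * exp (-((1 + x ^ 2) / 2) * z ^ 2))) := by
    rw [gaussianPDF, gaussianPDF, ← ENNReal.ofReal_mul (abs_nonneg z),
      ← ENNReal.ofReal_mul (gaussianPDFReal_nonneg _ _ _), mul_left_comm,
      gaussianPDFReal_mul_gaussianPDFReal,
      show -(z ^ 2 + (x * z) ^ 2) / 2 = -((1 + x ^ 2) / 2) * z ^ 2 by ring]
    ring_nf
  have hint : Integrable fun z : ℝ => |z| * exp (-((1 + x ^ 2) / 2) * z ^ 2) :=
    .of_integral_ne_zero (by rw [integral_abs_mul_exp_neg_mul_sq hb]; positivity)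
  rw [gaussianReal_of_var_ne_zero 0 one_ne_zero,
    lintegral_withDensity_eq_lintegral_mul _ (measurable_gaussianPDF 0 1) (by fun_prop)]
  simp only [Pi.mul_apply, hpoint]
  rw [← ofReal_integral_eq_lintegral_ofReal (hint.const_mul _) (.of_forall fun z => by positivity),
    integral_const_mul, integral_abs_mul_exp_neg_mul_sq hb, cauchyPDF, cauchyPDFReal,
    NNReal.coe_one]
  congr 1
  field_simp
  ring

lemma gaussianReal_singleton_eq_zero (μ : ℝ) {v : ℝ≥0} (hv : v ≠ 0) (x : ℝ) :
    gaussianReal μ v {x} = 0 :=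
  gaussianReal_absolutelyContinuous μ hv (measure_singleton x)

lemma gaussianReal_prod_map_div_eq_cauchyMeasure :
    ((gaussianReal 0 1).prod (gaussianReal 0 1)).map (fun p => p.2 / p.1) = cauchyMeasure 0 1 := by
  nth_rw 2 [gaussianReal_of_var_ne_zero 0 one_ne_zero]
  rw [prod_withDensity_map_div (gaussianReal_singleton_eq_zero 0 one_ne_zero 0)
      (measurable_gaussianPDF 0 1),
    cauchyMeasure_of_scale_ne_zero _ one_ne_zero]
  simp_rw [lintegral_abs_mul_gaussianPDF_mul_eq_cauchyPDF]

lemma gaussianReal_prod_map_correlated_ratio {σY σZ ρ t : ℝ} (hσY : 0 < σY) (hσZ : 0 < σZ)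
    (hρt : ρ ^ 2 + t ^ 2 = 1) (ht : 0 < t) :
    ((gaussianReal 0 1).prod (gaussianReal 0 1)).map
        (fun p => σY * p.1 / (σZ * (ρ * p.1 + t * p.2))) =
      cauchyMeasure (ρ * σY / σZ) (σY / σZ * t).toNNReal := by
  set N := gaussianReal 0 1
  let R := ContinuousLinearMap.rotation (E := ℝ) (arccos ρ)
  have hR (p : ℝ × ℝ) : R p = (ρ * p.1 + t * p.2, -t * p.1 + ρ * p.2) :=
    ContinuousLinearMap.rotation_arccos_apply hρt ht.le p
  have hRN : (N.prod N).map R = N.prod N :=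
    IsGaussian.map_rotation_eq_self (by simp [N, integral_id_gaussianReal]) _
  have hne : ∀ᵐ p ∂(N.prod N), (R p).1 ≠ 0 := by
    refine ae_of_ae_map (p := fun q : ℝ × ℝ => q.1 ≠ 0) R.continuous.measurable.aemeasurable ?_
    rw [hRN]
    exact Measure.quasiMeasurePreserving_fst.ae
      (measure_eq_zero_iff_ae_notMem.1 (gaussianReal_singleton_eq_zero 0 one_ne_zero 0))
  have hratio : (fun p : ℝ × ℝ => σY * p.1 / (σZ * (ρ * p.1 + t * p.2))) =ᵐ[N.prod N]
      (fun x => ρ * σY / σZ + -(σY / σZ * t) * x) ∘ (fun p => p.2 / p.1) ∘ R := by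
    filter_upwards [hne] with p hp
    replace hp : p.1 * ρ + t * p.2 ≠ 0 := by simpa [hR, mul_comm] using hp
    simp only [Function.comp_apply, hR]
    field_simp
    linear_combination (-p.1) * hρt
  rw [Measure.map_congr hratio, ← Measure.map_map (by fun_prop) (by fun_prop),
    ← Measure.map_map (by fun_prop) R.continuous.measurable, hRN,
    gaussianReal_prod_map_div_eq_cauchyMeasure,
    cauchyMeasure_map_const_add_mul _ _ _ (neg_ne_zero.2 (by positivity))]
  congr 1
  · ring
  · ext
    simp [abs_of_pos hσY, abs_of_pos hσZ, abs_of_pos ht]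
    positivity

/-- Let `(Y, Z)` be jointly normal, centered, with standard deviations `σY, σZ > 0`
and correlation `ρ` with `|ρ| < 1` (realized via independent standard normals
`W₁, W₂` as `Y = σY W₁` and `Z = σZ (ρ W₁ + √(1 - ρ²) W₂)`). Then the ratio
`X = Y / Z` follows the Cauchy distribution with location `α = ρ σY / σZ` and
scale `β = (σY / σZ) √(1 - ρ²)`. -/
theorem ratio_of_correlated_normals_cauchy
    {Ω : Type*} [MeasureSpace Ω] [IsProbabilityMeasure (ℙ : Measure Ω)]
    (σY σZ ρ : ℝ) (hσY : 0 < σY) (hσZ : 0 < σZ) (hρ : |ρ| < 1)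
    (W₁ W₂ Y Z : Ω → ℝ) (hW₁ : Measurable W₁) (hW₂ : Measurable W₂)
    (hW₁law : Measure.map W₁ ℙ = gaussianReal 0 1)
    (hW₂law : Measure.map W₂ ℙ = gaussianReal 0 1)
    (hindep : IndepFun W₁ W₂ ℙ)
    (hY : Y = fun ω => σY * W₁ ω)
    (hZ : Z = fun ω => σZ * (ρ * W₁ ω + Real.sqrt (1 - ρ ^ 2) * W₂ ω)) :
    Measure.map (fun ω => Y ω / Z ω) ℙ =
      volume.withDensity (fun x =>
        ENNReal.ofReal (1 / ((σY / σZ * Real.sqrt (1 - ρ ^ 2)) * π *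
          (1 + ((x - ρ * σY / σZ) / (σY / σZ * Real.sqrt (1 - ρ ^ 2))) ^ 2)))) := by
  subst hY hZ
  have hρ2 : ρ ^ 2 < 1 := (sq_lt_one_iff_abs_lt_one ρ).2 hρ
  have ht : 0 < √(1 - ρ ^ 2) := sqrt_pos.2 (by linarith)
  have hρt : ρ ^ 2 + √(1 - ρ ^ 2) ^ 2 = 1 := by rw [sq_sqrt (by linarith)]; ring
  have hW : Measure.map (fun ω => (W₁ ω, W₂ ω)) ℙ = (gaussianReal 0 1).prod (gaussianReal 0 1) := by
    rw [(indepFun_iff_map_prod_eq_prod_map_map hW₁.aemeasurable hW₂.aemeasurable).1 hindep,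
      hW₁law, hW₂law]
  rw [← cauchyMeasure_toNNReal_eq_withDensity _ (by positivity),
    ← gaussianReal_prod_map_correlated_ratio hσY hσZ hρt ht, ← hW,
    Measure.map_map (by fun_prop) (by fun_prop)]
  rfl
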